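/- (Khintchine inequality, lower and upper bound with explicit constant) Let x ∈ ℝ^n and let ε_1,…,ε_n be independent Rademacher random variables (uniform on {−1,1}). Then (1/√2)‖x‖_2 ≤ E|Σ_k ε_k x_k| ≤ ‖x‖_2. -/

import Mathlib

open MeasureTheory ENNReal ProbabilityTheory

/-- A real random variable is Rademacher if it takes the values `1` and `-1`
each with probability `1/2`. -/
def IsRademacher {Ω : Type*} [MeasurableSpace Ω] (μ : Measure Ω) (f : Ω → ℝ) : Prop :=
  μ (f ⁻¹' {1}) = 1 / 2 ∧ μ (f ⁻¹' {-1}) = 1 / 2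

/-! A Rademacher vector is uniformly distributed on the signs, so the claim is about the even
function `g b = |∑ k, ±x k|` on the cube `ι → Bool`, whose Walsh coefficients vanish on odd sets. By Parseval `∑_A ĝ(A)² = 𝔼 g² = ‖x‖²`, and the total influence
`∑_A |A| ĝ(A)²` is at most `‖x‖²` because flipping the `i`-th sign moves `g` by at most
`2 |x i|`. As every nonempty `A` with `ĝ(A) ≠ 0` has `|A| ≥ 2`, the sets `A ≠ ∅` carry at most
`‖x‖² / 2` of the mass, so `(𝔼 g)² = ĝ(∅)² ≥ ‖x‖² / 2`; the upper bound is `ĝ(∅)² ≤ ∑_A ĝ(A)²`. -/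

open Finset
open scoped BigOperators

def boolSign (v : Bool) : ℝ := if v then 1 else -1

@[simp] lemma boolSign_true : boolSign true = 1 := rfl

@[simp] lemma boolSign_false : boolSign false = -1 := rfl

@[simp] lemma boolSign_not (v : Bool) : boolSign (!v) = -boolSign v := by cases v <;> simp

@[simp] lemma boolSign_mul_self (v : Bool) : boolSign v * boolSign v = 1 := by
  cases v <;> simp

@[simp] lemma abs_boolSign (v : Bool) : |boolSign v| = 1 := by cases v <;> simp

lemma one_add_boolSign_mul_boolSign (v w : Bool) :
    1 + boolSign v * boolSign w = if v = w then 2 else 0 := by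
  cases v <;> cases w <;> norm_num

lemma expect_eq_zero_of_involutive {α : Type*} [Fintype α] {σ : α → α}
    (hσ : Function.Involutive σ) {g : α → ℝ} (hg : ∀ a, g (σ a) = -g a) :
    𝔼 a, g a = 0 := by
  have h : 𝔼 a, g a = 𝔼 a, -g a :=
    Fintype.expect_bijective σ hσ.bijective _ _ fun a => by rw [hg, neg_neg]
  rw [expect_neg_distrib] at h
  linarith

namespace BooleanCube

variable {ι : Type*}

def walsh (A : Finset ι) (b : ι → Bool) : ℝ := ∏ k ∈ A, boolSign (b k)

lemma walsh_not (A : Finset ι) (b : ι → Bool) :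
    walsh A (fun k => !b k) = (-1) ^ #A * walsh A b := by
  simp [walsh, prod_neg]

section Flip

variable [DecidableEq ι]

def flipAt (i : ι) (b : ι → Bool) : ι → Bool := Function.update b i (!b i)

lemma flipAt_involutive (i : ι) : Function.Involutive (flipAt i) := by
  intro b
  ext k
  by_cases hk : k = i
  · subst hk; simp [flipAt]
  · simp [flipAt, hk]

lemma boolSign_flipAt (i k : ι) (b : ι → Bool) :
    boolSign (flipAt i b k) = (if k = i then -1 else 1) * boolSign (b k) := by
  by_cases hk : k = i
  · subst hk; simp [flipAt]
  · simp [flipAt, hk]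

lemma walsh_flipAt (i : ι) (A : Finset ι) (b : ι → Bool) :
    walsh A (flipAt i b) = (if i ∈ A then -1 else 1) * walsh A b := by
  simp only [walsh, boolSign_flipAt, prod_mul_distrib, prod_ite_eq']

end Flip

section Fourier

variable [Fintype ι]

lemma sum_walsh_mul_walsh (b c : ι → Bool) :
    ∑ A, walsh A b * walsh A c = if b = c then 2 ^ Fintype.card ι else 0 := by
  calc ∑ A, walsh A b * walsh A c = ∏ k, (1 + boolSign (b k) * boolSign (c k)) := by
        simp only [walsh, ← prod_mul_distrib, prod_one_add, powerset_univ]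
    _ = _ := by
        simp only [one_add_boolSign_mul_boolSign, Fintype.prod_ite_zero, prod_const, card_univ,
          funext_iff]

variable [DecidableEq ι]

noncomputable def walshCoeff (f : (ι → Bool) → ℝ) (A : Finset ι) : ℝ :=
  𝔼 b, f b * walsh A b

lemma walshCoeff_empty (f : (ι → Bool) → ℝ) : walshCoeff f ∅ = 𝔼 b, f b := by
  simp [walshCoeff, walsh]

lemma sum_walshCoeff_mul_walsh (f : (ι → Bool) → ℝ) (b : ι → Bool) :
    ∑ A, walshCoeff f A * walsh A b = f b := by
  calc ∑ A, walshCoeff f A * walsh A b = 𝔼 c, f c * ∑ A, walsh A c * walsh A b := by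
        simp only [walshCoeff, expect_mul, mul_sum, mul_assoc, expect_sum_comm]
    _ = f b := by
        simp only [sum_walsh_mul_walsh, mul_ite, mul_zero, Fintype.expect_ite_eq',
          Fintype.card_fun, Fintype.card_bool, NNRat.smul_def, NNRat.cast_inv, NNRat.cast_pow,
          NNRat.cast_ofNat, Nat.cast_pow, Nat.cast_ofNat]
        field_simp

lemma expect_sq_eq_sum_walshCoeff_sq (f : (ι → Bool) → ℝ) :
    𝔼 b, f b ^ 2 = ∑ A, walshCoeff f A ^ 2 := by
  calc 𝔼 b, f b ^ 2 = 𝔼 b, f b * ∑ A, walshCoeff f A * walsh A b := by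
        simp only [sum_walshCoeff_mul_walsh, sq]
    _ = ∑ A, walshCoeff f A ^ 2 := by
        simp only [mul_sum, expect_sum_comm, walshCoeff, sq, mul_left_comm (f _), ← mul_expect]

noncomputable def discDeriv (i : ι) (f : (ι → Bool) → ℝ) (b : ι → Bool) : ℝ :=
  (f b - f (flipAt i b)) / 2

lemma walshCoeff_discDeriv (i : ι) (f : (ι → Bool) → ℝ) (A : Finset ι) :
    walshCoeff (discDeriv i f) A = if i ∈ A then walshCoeff f A else 0 := by
  have hflip :
      𝔼 b, f (flipAt i b) * walsh A b = (if i ∈ A then -1 else 1) * walshCoeff f A := by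
    rw [walshCoeff, mul_expect]
    refine Fintype.expect_bijective (flipAt i) (flipAt_involutive i).bijective _ _ fun b => ?_
    rw [walsh_flipAt]
    split_ifs <;> ring
  calc walshCoeff (discDeriv i f) A
        = (walshCoeff f A - 𝔼 b, f (flipAt i b) * walsh A b) / 2 := by
        simp only [walshCoeff, discDeriv, sub_mul, div_mul_eq_mul_div, ← expect_div,
          expect_sub_distrib]
    _ = if i ∈ A then walshCoeff f A else 0 := by
        rw [hflip]
        split_ifs <;> ring

lemma walshCoeff_eq_zero_of_odd {f : (ι → Bool) → ℝ} (hf : ∀ b, f (fun k => !b k) = f b)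
    {A : Finset ι} (hA : Odd #A) : walshCoeff f A = 0 :=
  expect_eq_zero_of_involutive (σ := fun b k => !b k) (fun b => by simp) fun b => by
    rw [hf, walsh_not, hA.neg_one_pow]
    ring

noncomputable def totalInfluence (f : (ι → Bool) → ℝ) : ℝ := ∑ i, 𝔼 b, discDeriv i f b ^ 2

lemma sum_card_mul_walshCoeff_sq_eq_totalInfluence (f : (ι → Bool) → ℝ) :
    ∑ A, (#A : ℝ) * walshCoeff f A ^ 2 = totalInfluence f := by
  simp only [totalInfluence, expect_sq_eq_sum_walshCoeff_sq, walshCoeff_discDeriv, ite_pow,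
    zero_pow two_ne_zero]
  rw [sum_comm]
  simp only [Fintype.sum_ite_mem, sum_const, nsmul_eq_mul]

lemma expect_sq_le_sq_expect_add_totalInfluence_div_two {f : (ι → Bool) → ℝ}
    (hf : ∀ b, f (fun k => !b k) = f b) :
    𝔼 b, f b ^ 2 ≤ (𝔼 b, f b) ^ 2 + totalInfluence f / 2 := by
  rw [expect_sq_eq_sum_walshCoeff_sq, ← sum_card_mul_walshCoeff_sq_eq_totalInfluence,
    ← walshCoeff_empty, sum_div]
  calc ∑ A, walshCoeff f A ^ 2
      ≤ ∑ A, ((if A = ∅ then walshCoeff f A ^ 2 else 0) + #A * walshCoeff f A ^ 2 / 2) :=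
        sum_le_sum fun A _ => ?_
    _ = walshCoeff f ∅ ^ 2 + ∑ A, #A * walshCoeff f A ^ 2 / 2 := by
        rw [sum_add_distrib, sum_ite_eq' univ]
        simp
  rcases eq_or_ne A ∅ with rfl | hA
  · simp
  rcases Nat.even_or_odd #A with heven | hodd
  · have hcard : (2 : ℝ) ≤ #A := by
      obtain ⟨m, hm⟩ := heven
      have : #A ≠ 0 := card_ne_zero.mpr (nonempty_iff_ne_empty.mpr hA)
      exact_mod_cast (show 2 ≤ #A by omega)
    rw [if_neg hA]
    nlinarith [sq_nonneg (walshCoeff f A)]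
  · simp [walshCoeff_eq_zero_of_odd hf hodd]

end Fourier

section RademacherSum

variable [Fintype ι]

def rademacherSum (x : ι → ℝ) (b : ι → Bool) : ℝ := ∑ k, boolSign (b k) * x k

lemma rademacherSum_not (x : ι → ℝ) (b : ι → Bool) :
    rademacherSum x (fun k => !b k) = -rademacherSum x b := by
  simp [rademacherSum, sum_neg_distrib]

variable [DecidableEq ι]

lemma expect_boolSign_mul_boolSign (k l : ι) :
    𝔼 b : ι → Bool, boolSign (b k) * boolSign (b l) = if k = l then 1 else 0 := by
  split_ifs with hkl
  · simp [hkl]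
  · exact expect_eq_zero_of_involutive (flipAt_involutive k) fun b => by
      simp [boolSign_flipAt, Ne.symm hkl]

lemma expect_rademacherSum_sq (x : ι → ℝ) : 𝔼 b, rademacherSum x b ^ 2 = ∑ k, x k ^ 2 := by
  calc 𝔼 b, rademacherSum x b ^ 2
      = ∑ k, ∑ l, x k * x l * 𝔼 b : ι → Bool, boolSign (b k) * boolSign (b l) := by
        simp only [rademacherSum, sq, sum_mul_sum, expect_sum_comm, mul_expect]
        exact sum_congr rfl fun k _ => sum_congr rfl fun l _ =>
          expect_congr rfl fun b _ => by ring
    _ = ∑ k, x k ^ 2 := by simp [expect_boolSign_mul_boolSign, sq]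

lemma rademacherSum_sub_rademacherSum_flipAt (x : ι → ℝ) (i : ι) (b : ι → Bool) :
    rademacherSum x b - rademacherSum x (flipAt i b) = 2 * boolSign (b i) * x i := by
  simp only [rademacherSum, ← sum_sub_distrib, boolSign_flipAt, ← sub_mul, ← one_sub_mul]
  rw [sum_eq_single i (fun k _ hk => by simp [hk]) (by simp)]
  norm_num

lemma abs_discDeriv_abs_rademacherSum_le (x : ι → ℝ) (i : ι) (b : ι → Bool) :
    |discDeriv i (fun b => |rademacherSum x b|) b| ≤ |x i| := by
  have h := abs_abs_sub_abs_le_abs_sub (rademacherSum x b) (rademacherSum x (flipAt i b))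
  rw [rademacherSum_sub_rademacherSum_flipAt, abs_mul, abs_mul, abs_boolSign, abs_two,
    mul_one] at h
  rw [discDeriv, abs_div, abs_two]
  linarith

lemma totalInfluence_abs_rademacherSum_le (x : ι → ℝ) :
    totalInfluence (fun b => |rademacherSum x b|) ≤ ∑ i, x i ^ 2 := by
  refine sum_le_sum fun i _ => ?_
  calc 𝔼 b, discDeriv i (fun b => |rademacherSum x b|) b ^ 2
        ≤ 𝔼 _b : ι → Bool, x i ^ 2 :=
        expect_le_expect fun b _ => sq_le_sq.mpr (abs_discDeriv_abs_rademacherSum_le x i b)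
    _ = x i ^ 2 := Fintype.expect_const _

theorem khintchine_cube (x : ι → ℝ) :
    √((∑ k, x k ^ 2) / 2) ≤ 𝔼 b, |rademacherSum x b| ∧
      𝔼 b, |rademacherSum x b| ≤ √(∑ k, x k ^ 2) := by
  set g : (ι → Bool) → ℝ := fun b => |rademacherSum x b|
  have hg_sq : 𝔼 b, g b ^ 2 = ∑ k, x k ^ 2 := by simp [g, sq_abs, expect_rademacherSum_sq]
  have hg_mean : 0 ≤ 𝔼 b, g b := expect_nonneg fun b _ => abs_nonneg _
  refine ⟨(Real.sqrt_le_left hg_mean).mpr ?_,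
    (Real.le_sqrt hg_mean (sum_nonneg fun k _ => sq_nonneg _)).mpr ?_⟩
  · have h := expect_sq_le_sq_expect_add_totalInfluence_div_two (f := g)
      fun b => by simp [g, rademacherSum_not]
    linarith [totalInfluence_abs_rademacherSum_le x]
  · calc (𝔼 b, g b) ^ 2 = walshCoeff g ∅ ^ 2 := by rw [walshCoeff_empty]
      _ ≤ ∑ A, walshCoeff g A ^ 2 := single_le_sum (fun A _ => sq_nonneg _) (mem_univ ∅)
      _ = ∑ k, x k ^ 2 := by rw [← expect_sq_eq_sum_walshCoeff_sq, hg_sq]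

end RademacherSum

end BooleanCube

section Rademacher

variable {Ω : Type*} [MeasurableSpace Ω] {μ : Measure Ω} [IsProbabilityMeasure μ] {f : Ω → ℝ}

lemma IsRademacher.ae_eq_one_or_eq_neg_one (hf : Measurable f) (h : IsRademacher μ f) :
    ∀ᵐ ω ∂μ, f ω = 1 ∨ f ω = -1 := by
  have hdisj : Disjoint (f ⁻¹' {1}) (f ⁻¹' {-1}) :=
    Disjoint.preimage _ (Set.disjoint_singleton.mpr (by norm_num))
  have hmeas : MeasurableSet (f ⁻¹' {1} ∪ f ⁻¹' {-1}) :=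
    (hf (measurableSet_singleton 1)).union (hf (measurableSet_singleton (-1)))
  have := (ae_mem_iff_measure_eq hmeas.nullMeasurableSet).mpr (by
    rw [measure_union hdisj (hf (measurableSet_singleton (-1))), h.1, h.2, ENNReal.add_halves,
      measure_univ])
  simpa using this

lemma IsRademacher.measure_decide_eq_one (hf : Measurable f) (h : IsRademacher μ f)
    (v : Bool) : μ ((fun ω => decide (f ω = 1)) ⁻¹' {v}) = 1 / 2 := by
  cases v
  · have hcompl : (fun ω => decide (f ω = 1)) ⁻¹' {false} = (f ⁻¹' {1})ᶜ := by ext; simp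
    rw [hcompl, prob_compl_eq_one_sub (hf (measurableSet_singleton 1)), h.1, one_div,
      ENNReal.one_sub_inv_two]
  · have hpre : (fun ω => decide (f ω = 1)) ⁻¹' {true} = f ⁻¹' {1} := by ext; simp
    rw [hpre, h.1]

variable {ι : Type*} [Fintype ι] [DecidableEq ι] {ε : ι → Ω → ℝ}

lemma integral_comp_eq_expect_boolSign (hmeas : ∀ k, Measurable (ε k)) (hindep : iIndepFun ε μ)
    (hrad : ∀ k, IsRademacher μ (ε k)) (F : (ι → ℝ) → ℝ) :
    ∫ ω, F (fun k => ε k ω) ∂μ = 𝔼 b : ι → Bool, F (fun k => boolSign (b k)) := by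
  set toBool : ℝ → Bool := fun r => decide (r = 1)
  have htoBool : Measurable toBool :=
    measurable_to_bool (by convert measurableSet_singleton (1 : ℝ); ext; simp [toBool])
  set β : Ω → ι → Bool := fun ω k => toBool (ε k ω)
  have hβ : Measurable β := measurable_pi_lambda _ fun k => htoBool.comp (hmeas k)
  have hae : ∀ᵐ ω ∂μ, (fun k => ε k ω) = fun k => boolSign (β ω k) := by
    simp only [funext_iff]
    refine ae_all_iff.mpr fun k => ?_
    filter_upwards [(hrad k).ae_eq_one_or_eq_neg_one (hmeas k)] with ω hω
    rcases hω with hω | hω <;> norm_num [β, toBool, hω]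
  have hfiber : ∀ b : ι → Bool, μ.real (β ⁻¹' {b}) = (2 ^ Fintype.card ι)⁻¹ := by
    intro b
    have hpre : β ⁻¹' {b} = ⋂ k ∈ univ, toBool ∘ ε k ⁻¹' {b k} := by
      ext ω; simp [β, funext_iff]
    rw [measureReal_def, hpre, (hindep.comp (fun _ => toBool) fun _ => htoBool)
      |>.measure_inter_preimage_eq_mul _ fun _ _ => measurableSet_singleton _]
    have hmarg : ∀ k, μ (toBool ∘ ε k ⁻¹' {b k}) = 1 / 2 :=
      fun k => (hrad k).measure_decide_eq_one (hmeas k) (b k)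
    simp [hmarg]
  calc ∫ ω, F (fun k => ε k ω) ∂μ = ∫ ω, F (fun k => boolSign (β ω k)) ∂μ :=
        integral_congr_ae (hae.mono fun ω hω => by simp only [hω])
    _ = ∫ b, F (fun k => boolSign (b k)) ∂(μ.map β) :=
        (integral_map (f := fun b : ι → Bool => F fun k => boolSign (b k)) hβ.aemeasurable
          (measurable_of_finite _).aestronglyMeasurable).symm
    _ = 𝔼 b : ι → Bool, F (fun k => boolSign (b k)) := by
        rw [integral_fintype .of_finite]
        simp only [map_measureReal_apply hβ (measurableSet_singleton _), hfiber, smul_eq_mul,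
          ← mul_sum, Fintype.expect_eq_sum_div_card, Fintype.card_fun, Fintype.card_bool]
        push_cast
        ring

end Rademacher

/-- Khintchine inequality: `(1/√2) ‖x‖₂ ≤ E|Σ_k ε_k x_k| ≤ ‖x‖₂` for a
Rademacher vector `ε` and fixed `x ∈ ℝⁿ`. -/
theorem khintchine_inequality {Ω : Type*} [MeasurableSpace Ω]
    (μ : Measure Ω) [IsProbabilityMeasure μ] {n : ℕ} (x : Fin n → ℝ)
    (ε : Fin n → Ω → ℝ) (hmeas : ∀ k, Measurable (ε k))
    (hindep : iIndepFun ε μ)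
    (hrad : ∀ k, IsRademacher μ (ε k)) :
    (1 / Real.sqrt 2) * Real.sqrt (∑ k, x k ^ 2)
        ≤ ∫ ω, |∑ k, ε k ω * x k| ∂μ ∧
      ∫ ω, |∑ k, ε k ω * x k| ∂μ ≤ Real.sqrt (∑ k, x k ^ 2) := by
  have hcube : ∫ ω, |∑ k, ε k ω * x k| ∂μ = 𝔼 b, |BooleanCube.rademacherSum x b| :=
    integral_comp_eq_expect_boolSign hmeas hindep hrad fun e => |∑ k, e k * x k|
  obtain ⟨hlower, hupper⟩ := BooleanCube.khintchine_cube x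
  rw [hcube]
  refine ⟨le_of_eq_of_le ?_ hlower, hupper⟩
  rw [Real.sqrt_div' _ zero_le_two]
  ring
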